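/- arXiv:1611.06493 — 3 statements merged into one kernel-verified Lean document; each statement's English description precedes it below -/
import Mathlib

section
/- Let p'(m|K) = (Π a_i^{m_i}/m_i!) / C_{N,K} for m ∈ P'_{N,K}. Then the mean number of clusters of size i, ⟨M_i⟩_{N,K} = Σ_{m ∈ P'_{N,K}} m_i · p'(m|K), equals a_i · C_{N-i,K-1} / C_{N,K}, provided C_{N,K} ≠ 0. -/
/-!
Removing one cluster of size `i` is a bijection `m ↦ m - e_i` from the vectors of `P'_{N,K}`
with `m_i ≥ 1` onto `P'_{N-i,K-1}`, and it transforms the weights by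
`m_i · a_i^{m_i} / m_i! = a_i · a_i^{m_i - 1} / (m_i - 1)!`. Hence
`∑_{m ∈ P'_{N,K}} m_i ∏ a_j^{m_j}/m_j! = a_i C_{N-i,K-1}`, and dividing by `C_{N,K}` gives
the claim. To perform the shift inside a single index type, `P'_{N-i,K-1}` is realised by
vectors of length `N + 1` padded with zeros.
-/

open Finset

/-- The set `P'_{N,K}`: multiplicity vectors `(m_1,…,m_N)` (encoded with a dummy
`m_0 = 0`) with `∑ i·m_i = N` and `∑ m_i = K`. -/
def PNK (N K : ℕ) : Finset (Fin (N + 1) → ℕ) :=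
  (Fintype.piFinset fun _ => Finset.range (N + 1)).filter
    fun m => m 0 = 0 ∧ (∑ i, i.1 * m i = N) ∧ (∑ i, m i = K)

/-- Normalization constant `C_{N,K} = ∑_{m ∈ P'_{N,K}} ∏ a_i^{m_i}/m_i!`. -/
noncomputable def CNK (a : ℕ → ℝ) (N K : ℕ) : ℝ :=
  ∑ m ∈ PNK N K, ∏ i, a i.1 ^ m i / (Nat.factorial (m i) : ℝ)

open Function

@[to_additive]
lemma Function.Injective.prod_extend {ι κ α M : Type*} [Fintype ι] [Fintype κ] [CommMonoid M]
    {f : ι → κ} (hf : Injective f) (g : ι → α) (e : κ → α) (F : κ → α → M)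
    (hF : ∀ k, (¬∃ i, f i = k) → F k (e k) = 1) :
    ∏ k, F k (extend f g e k) = ∏ i, F (f i) (g i) := by
  refine (prod_of_injOn f hf.injOn (fun i _ => mem_coe.2 (mem_univ _)) (fun k _ hk => ?_)
    fun i _ => by rw [hf.extend_apply]).symm
  have hk' : ¬∃ i, f i = k := by simpa using hk
  rw [extend_apply' _ _ _ hk', hF k hk']

/-- `P'_{M,K}`, with the multiplicity vectors padded by zeros to length `n + 1` when `n ≥ M`. -/
def multiplicityVectors (n M K : ℕ) : Finset (Fin (n + 1) → ℕ) :=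
  (Fintype.piFinset fun _ => range (M + 1)).filter
    fun m => m 0 = 0 ∧ (∑ j, j.1 * m j = M) ∧ (∑ j, m j = K)

lemma PNK_eq_multiplicityVectors (N K : ℕ) : PNK N K = multiplicityVectors N N K := rfl

section multiplicityVectors

variable {n M K : ℕ} {m : Fin (n + 1) → ℕ}

lemma val_mul_le_of_sum_eq (hm : ∑ j, j.1 * m j = M) (j : Fin (n + 1)) :
    j.1 * m j ≤ M :=
  (single_le_sum (f := fun j : Fin (n + 1) => j.1 * m j) (fun _ _ => Nat.zero_le _)
    (mem_univ j)).trans_eq hm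

lemma mem_multiplicityVectors :
    m ∈ multiplicityVectors n M K ↔
      m 0 = 0 ∧ (∑ j, j.1 * m j = M) ∧ (∑ j, m j = K) := by
  refine ⟨fun hm => (mem_filter.1 hm).2, fun hm => mem_filter.2 ⟨?_, hm⟩⟩
  refine Fintype.mem_piFinset.2 fun j => mem_range.2 (Nat.lt_succ_of_le ?_)
  rcases eq_or_ne j 0 with rfl | hj
  · exact hm.1.trans_le (Nat.zero_le M)
  · calc m j ≤ j.1 * m j := Nat.le_mul_of_pos_left _ (Fin.pos_iff_ne_zero.2 hj)
      _ ≤ M := val_mul_le_of_sum_eq hm.2.1 j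

lemma multiplicityVectors_zero_eq_empty (hM : M ≠ 0) : multiplicityVectors n M 0 = ∅ := by
  refine eq_empty_of_forall_notMem fun m hm => hM ?_
  obtain ⟨-, hsum, hcount⟩ := mem_multiplicityVectors.1 hm
  simp_all [sum_eq_zero_iff]

end multiplicityVectors

noncomputable def weight (a : ℕ → ℝ) {n : ℕ} (m : Fin (n + 1) → ℕ) : ℝ :=
  ∏ j, a j.1 ^ m j / (m j).factorial

lemma CNK_eq_sum_weight (a : ℕ → ℝ) (N K : ℕ) :
    CNK a N K = ∑ m ∈ multiplicityVectors N N K, weight a m := rfl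

section shift

variable {n : ℕ} (I : Fin (n + 1))

lemma add_single_mem_multiplicityVectors_iff (hI : I ≠ 0) {M K : ℕ} {m : Fin (n + 1) → ℕ} :
    m + Pi.single I 1 ∈ multiplicityVectors n (M + I) (K + 1) ↔
      m ∈ multiplicityVectors n M K := by
  simp [mem_multiplicityVectors, mul_add, sum_add_distrib, Pi.single_apply, hI.symm]

lemma single_le_of_ne_zero {m : Fin (n + 1) → ℕ} (hm : m I ≠ 0) : Pi.single I 1 ≤ m := by
  intro j
  rcases eq_or_ne j I with rfl | hj
  · simpa [Nat.one_le_iff_ne_zero]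
  · simp [hj]

lemma cast_add_single_mul_weight (a : ℕ → ℝ) (m : Fin (n + 1) → ℕ) :
    ((m I + 1 : ℕ) : ℝ) * weight a (m + Pi.single I 1) = a I * weight a m := by
  rw [weight, weight, Fintype.prod_eq_mul_prod_compl I, Fintype.prod_eq_mul_prod_compl I]
  rw [prod_congr rfl fun j hj => by rw [Pi.add_apply, Pi.single_eq_of_ne (by simpa using hj),
    add_zero]]
  simp only [Pi.add_apply, Pi.single_eq_same, Nat.factorial_succ]
  push_cast
  field_simp
  ring

lemma sum_apply_mul_weight (hI : I ≠ 0) (a : ℕ → ℝ) (M K : ℕ) :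
    ∑ m ∈ multiplicityVectors n (M + I) (K + 1), (m I : ℝ) * weight a m
      = a I * ∑ m ∈ multiplicityVectors n M K, weight a m := by
  rw [mul_sum, ← sum_filter_of_ne (p := fun m => m I ≠ 0) fun m _ h hI0 => h (by simp [hI0])]
  have hcancel {m : Fin (n + 1) → ℕ} (hm : m I ≠ 0) : m - Pi.single I 1 + Pi.single I 1 = m :=
    tsub_add_cancel_of_le (single_le_of_ne_zero I hm)
  refine sum_nbij' (· - Pi.single I 1) (· + Pi.single I 1) (fun m hm => ?_) (fun m hm => ?_)
    (fun m hm => hcancel (mem_filter.1 hm).2) (fun m _ => add_tsub_cancel_right m _)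
    (fun m hm => ?_)
  · obtain ⟨hm, hmI⟩ := mem_filter.1 hm
    rwa [← add_single_mem_multiplicityVectors_iff I hI, hcancel hmI]
  · exact mem_filter.2 ⟨(add_single_mem_multiplicityVectors_iff I hI).2 hm, by simp⟩
  · have hmI := (mem_filter.1 hm).2
    rw [← cast_add_single_mul_weight, hcancel hmI, Pi.sub_apply, Pi.single_eq_same,
      Nat.sub_add_cancel (Nat.one_le_iff_ne_zero.2 hmI)]

end shift

section padding

variable {M n : ℕ} (h : M + 1 ≤ n + 1)

lemma extend_castLE_mem_multiplicityVectors_iff {K : ℕ} {m : Fin (M + 1) → ℕ} :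
    extend (Fin.castLE h) m 0 ∈ multiplicityVectors n M K ↔
      m ∈ multiplicityVectors M M K := by
  have hinj := Fin.castLE_injective h
  rw [mem_multiplicityVectors, mem_multiplicityVectors,
    hinj.sum_extend m 0 (fun j c => j.1 * c) fun _ _ => mul_zero _,
    hinj.sum_extend m 0 (fun _ c => c) fun _ _ => rfl, ← Fin.castLE_zero h,
    hinj.extend_apply]
  rfl

lemma extend_castLE_comp {K : ℕ} {m : Fin (n + 1) → ℕ}
    (hm : m ∈ multiplicityVectors n M K) : extend (Fin.castLE h) (m ∘ Fin.castLE h) 0 = m := by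
  funext k
  by_cases hk : ∃ j, Fin.castLE h j = k
  · obtain ⟨j, rfl⟩ := hk
    exact (Fin.castLE_injective h).extend_apply _ _ j
  · rw [extend_apply' _ _ _ hk, Pi.zero_apply, eq_comm]
    have hMk : M < k.1 := by
      by_contra hle
      exact hk ⟨⟨k, by omega⟩, rfl⟩
    have hkm := val_mul_le_of_sum_eq (mem_multiplicityVectors.1 hm).2.1 k
    rcases Nat.eq_zero_or_pos (m k) with h0 | hpos
    · exact h0
    · exact absurd ((Nat.le_mul_of_pos_right k hpos).trans hkm) (by omega)

lemma weight_extend_castLE (a : ℕ → ℝ) (m : Fin (M + 1) → ℕ) :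
    weight a (extend (Fin.castLE h) m 0) = weight a m :=
  (Fin.castLE_injective h).prod_extend m 0 (fun k c => a k ^ c / c.factorial)
    fun _ _ => by simp

lemma sum_weight_multiplicityVectors (a : ℕ → ℝ) (hM : M ≤ n) (K : ℕ) :
    ∑ m ∈ multiplicityVectors n M K, weight a m = CNK a M K := by
  have h : M + 1 ≤ n + 1 := Nat.succ_le_succ hM
  refine (sum_nbij' (fun m => extend (Fin.castLE h) m 0) (· ∘ Fin.castLE h)
    (fun m hm => (extend_castLE_mem_multiplicityVectors_iff h).2 hm) (fun m hm => ?_)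
    (fun m _ => extend_comp (Fin.castLE_injective h) m 0)
    (fun m hm => extend_castLE_comp h hm) (fun m _ => (weight_extend_castLE h a m).symm)).symm
  rwa [← extend_castLE_mem_multiplicityVectors_iff h, extend_castLE_comp h hm]

end padding

theorem mean_clusters_of_size_general (a : ℕ → ℝ) (N K i : ℕ) (hi1 : 1 ≤ i) (hiN : i ≤ N) :
    ∑ m ∈ PNK N K, (m ⟨i, Nat.lt_succ_of_le hiN⟩ : ℝ) *
        ((∏ j, a j.1 ^ m j / (Nat.factorial (m j) : ℝ)) / CNK a N K)
      = a i * CNK a (N - i) (K - 1) / CNK a N K := by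
  set I : Fin (N + 1) := ⟨i, Nat.lt_succ_of_le hiN⟩
  simp_rw [mul_div_assoc', ← sum_div]
  rcases K with _ | K
  · -- `P'_{N,0} = ∅`, so both sides are divisions by `C_{N,0} = 0`.
    simp [CNK_eq_sum_weight, multiplicityVectors_zero_eq_empty (show N ≠ 0 by omega)]
  · have key := sum_apply_mul_weight I (Fin.pos_iff_ne_zero.1 hi1) a (N - i) K
    rw [show N - i + I = N from Nat.sub_add_cancel hiN,
      sum_weight_multiplicityVectors a (Nat.sub_le N i)] at key
    rw [Nat.add_sub_cancel, ← key]
    rfl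

/-- The mean number of clusters of size `i` under `p'(·|K)` equals
`a_i · C_{N-i,K-1} / C_{N,K}`. -/
theorem mean_clusters_of_size (a : ℕ → ℝ) (N K i : ℕ) (hi1 : 1 ≤ i) (hiN : i ≤ N)
    (hC : CNK a N K ≠ 0) :
    ∑ m ∈ PNK N K, (m ⟨i, Nat.lt_succ_of_le hiN⟩ : ℝ) *
        ((∏ j, a j.1 ^ m j / (Nat.factorial (m j) : ℝ)) / CNK a N K)
      = a i * CNK a (N - i) (K - 1) / CNK a N K :=
  mean_clusters_of_size_general a N K i hi1 hiN
end

section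
/- For integers N ≥ K ≥ 2, Σ_{j=1}^{N−K+1} j²·(N−j−1)!/(N−j−K+1)! = [N!/(N−K)!]·(2N−K+1)/[(K−1)·K·(K+1)]. -/
/-!
With `K = s + 2`, the summand is `s! * C(N - 1 - j, s) * j²`. Writing `j² = 2 C(j, 2) + C(j, 1)`,
the upper Chu–Vandermonde identity `∑_{i + k = n} C(i, r) C(k, s) = C(n + 1, r + s + 1)` turns
the sum into `s! * (2 C(N, K + 1) + C(N, K))`, and `C(N, K + 1) (K + 1) = C(N, K) (N - K)` makes
this the closed form.
-/

open Finset

namespace Nat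

theorem sum_antidiagonal_choose_mul_choose (r s n : ℕ) :
    ∑ p ∈ antidiagonal n, p.1.choose r * p.2.choose s = (n + 1).choose (r + s + 1) := by
  induction n generalizing r with
  | zero =>
    rcases r with _ | r <;> rcases s with _ | s <;> simp [choose_eq_zero_of_lt]
  | succ n ih =>
    rw [Finset.Nat.sum_antidiagonal_succ]
    rcases r with _ | r
    · have h := ih 0
      simp only [choose_zero_right, one_mul, zero_add] at h ⊢
      rw [h, choose_succ_succ' (n + 1) s]
    · have pascal : ∀ p ∈ antidiagonal n, (p.1 + 1).choose (r + 1) * p.2.choose s =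
          p.1.choose r * p.2.choose s + p.1.choose (r + 1) * p.2.choose s := fun p _ => by
        rw [choose_succ_succ', add_mul]
      rw [choose_zero_succ, zero_mul, zero_add, sum_congr rfl pascal, sum_add_distrib, ih, ih,
        show r + 1 + s + 1 = r + s + 1 + 1 by omega, choose_succ_succ' (n + 1)]

theorem sq_eq_two_mul_choose_two_add_choose_one (j : ℕ) :
    j ^ 2 = 2 * j.choose 2 + j.choose 1 := by
  induction j with
  | zero => rfl
  | succ j ih =>
    rw [choose_one_right] at ih ⊢
    rw [choose_succ_succ, choose_one_right]
    linear_combination ih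

theorem sum_antidiagonal_sq_mul_choose (s n : ℕ) :
    ∑ p ∈ antidiagonal n, p.1 ^ 2 * p.2.choose s =
      2 * (n + 1).choose (s + 3) + (n + 1).choose (s + 2) := by
  simp only [sq_eq_two_mul_choose_two_add_choose_one, add_mul, mul_assoc, sum_add_distrib,
    ← mul_sum, sum_antidiagonal_choose_mul_choose]
  rw [add_comm 2 s, add_comm 1 s]

theorem sum_Icc_sq_mul_choose (s n : ℕ) :
    ∑ j ∈ Icc 1 (n - s), j ^ 2 * (n - j).choose s =
      2 * (n + 1).choose (s + 3) + (n + 1).choose (s + 2) := by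
  rw [← sum_antidiagonal_sq_mul_choose, Finset.Nat.sum_antidiagonal_eq_sum_range_succ_mk]
  refine sum_subset (fun j hj => by simp only [mem_Icc, mem_range] at hj ⊢; omega) ?_
  intro j hjn hj
  rcases Nat.eq_zero_or_pos j with rfl | hj0
  · simp
  · rw [choose_eq_zero_of_lt (by simp only [mem_Icc, mem_range] at hj hjn; omega), mul_zero]

theorem cast_factorial_div_factorial_sub {R : Type*} [DivisionRing R] [CharZero R] {m s : ℕ}
    (h : s ≤ m) : (m ! : R) / (m - s)! = m.choose s * s ! := by
  rw [div_eq_iff (by exact_mod_cast (m - s).factorial_ne_zero)]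
  exact_mod_cast (choose_mul_factorial_mul_factorial h).symm

theorem cast_two_mul_choose_add_choose_mul_factorial {N s : ℕ} (h : s + 2 ≤ N) :
    ((2 * N.choose (s + 3) + N.choose (s + 2) : ℕ) : ℝ) * s ! =
      N ! / (N - (s + 2))! * (2 * N - (s + 2) + 1) / ((s + 1) * (s + 2) * (s + 3)) := by
  have hchoose : (N.choose (s + 3) : ℝ) * (s + 3) = N.choose (s + 2) * (N - (s + 2) : ℕ) := by
    exact_mod_cast choose_succ_right_eq N (s + 2)
  rw [← choose_mul_factorial_mul_factorial h, factorial_succ, factorial_succ]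
  push_cast [cast_sub h] at hchoose ⊢
  field_simp
  linear_combination 2 * ((s : ℝ) + 2) * hchoose

end Nat

/-- `Σ_{j=1}^{N−K+1} j²·(N−j−1)!/(N−j−K+1)! = [N!/(N−K)!]·(2N−K+1)/[(K−1)·K·(K+1)]`. -/
theorem sum_sq_falling_factorial (N K : ℕ) (hK : 2 ≤ K) (hKN : K ≤ N) :
    ∑ j ∈ Finset.Icc 1 (N - K + 1),
        (j : ℝ) ^ 2 * (Nat.factorial (N - j - 1) : ℝ) / (Nat.factorial (N - j - K + 1) : ℝ)
      = (Nat.factorial N : ℝ) / (Nat.factorial (N - K) : ℝ)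
          * (2 * (N : ℝ) - K + 1) / (((K : ℝ) - 1) * K * (K + 1)) := by
  obtain ⟨s, rfl⟩ : ∃ s, K = s + 2 := ⟨K - 2, by omega⟩
  have hterm : ∀ j ∈ Icc 1 (N - (s + 2) + 1), (j : ℝ) ^ 2 * (N - j - 1).factorial /
      (N - j - (s + 2) + 1).factorial = ((j ^ 2 * (N - 1 - j).choose s : ℕ) : ℝ) * s.factorial := by
    intro j hj
    rw [mem_Icc] at hj
    -- at the top index `j = N - K + 1` the truncated `N - j - K + 1` is `1`, not `0`
    have hbottom : (N - j - (s + 2) + 1).factorial = (N - 1 - j - s).factorial := by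
      rcases (show j ≤ N - (s + 2) ∨ j = N - (s + 2) + 1 by omega) with h | rfl
      · congr 1
        omega
      · rw [show N - (N - (s + 2) + 1) - (s + 2) + 1 = 1 by omega,
          show N - 1 - (N - (s + 2) + 1) - s = 0 by omega]
        rfl
    rw [hbottom, mul_div_assoc, show N - j - 1 = N - 1 - j by omega,
      Nat.cast_factorial_div_factorial_sub (by omega)]
    push_cast
    ring
  rw [sum_congr rfl hterm, ← sum_mul, ← Nat.cast_sum, show N - (s + 2) + 1 = N - 1 - s by omega,
    Nat.sum_Icc_sq_mul_choose, Nat.sub_add_cancel (by omega),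
    Nat.cast_two_mul_choose_add_choose_mul_factorial hKN]
  push_cast
  ring
end

section
/- Let a > 0, N ≥ 1, and define ₁F₁(−N+1; 2; z) = Σ_{n=0}^{N−1} ((−N+1)_n/(2)_n)·zⁿ/n! (a polynomial since the series terminates). With Π_{K+1} = (2a)^K·(N−1)!/[K!·(K+1)!·(N−K−1)!]·Π_1 for 0 ≤ K ≤ N−1 and Σ_{K=1}^N Π_K = 1, one has Π_1 = 1/₁F₁(−N+1; 2; −2a). -/
/-! Since `(−N+1)_n = (−1)ⁿ (N−1)!/(N−1−n)!` and `(2)_n = (n+1)!`, the `n`-th term of the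
terminating Kummer series is exactly the weight `Π_{n+1}/Π_1`; summing the relations for
`Π_{K+1}` therefore gives `₁F₁(−N+1; 2; −2a) · Π_1 = Σ_K Π_K = 1`. -/

open Finset

section Pochhammer

open Polynomial Nat

theorem ascPochhammer_eval_two (S : Type*) [Semiring S] (n : ℕ) :
    (ascPochhammer S n).eval 2 = ((n + 1)! : S) := by
  have h := factorial_mul_ascFactorial 1 n
  rw [factorial_one, one_mul] at h
  rw [← Nat.cast_ofNat, ascPochhammer_nat_eq_natCast_ascFactorial, h, add_comm]

theorem ascPochhammer_eval_neg_natCast_mul_factorial (R : Type*) [CommRing R] {m n : ℕ}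
    (h : n ≤ m) : (ascPochhammer R n).eval (-(m : R)) * (m - n)! = (-1) ^ n * m ! := by
  rw [ascPochhammer_eval_neg_eq_descPochhammer, descPochhammer_eval_eq_descFactorial, mul_assoc,
    ← Nat.cast_mul, mul_comm (m.descFactorial n), factorial_mul_descFactorial h]

variable {K : Type*} [Field K] [CharZero K]

theorem kummer_term_eq {N n : ℕ} (hn : n < N) (a : K) :
    (ascPochhammer K n).eval (-(N : K) + 1) / (ascPochhammer K n).eval 2 * (-2 * a) ^ n / n !
      = (2 * a) ^ n * (N - 1)! / (n ! * (n + 1)! * (N - n - 1)!) := by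
  have hpoch := ascPochhammer_eval_neg_natCast_mul_factorial K (m := N - 1) (n := n) (by omega)
  rw [Nat.cast_sub (by omega), Nat.cast_one, neg_sub', sub_eq_add_neg, neg_neg,
    Nat.sub_right_comm] at hpoch
  have hsign : (-1 : K) ^ n * (-2 * a) ^ n = (2 * a) ^ n := by
    rw [← mul_pow]; ring
  rw [ascPochhammer_eval_two, eq_div_of_mul_eq (Nat.cast_ne_zero.mpr (factorial_ne_zero _)) hpoch,
    ← hsign]
  field_simp

end Pochhammer

theorem sum_Icc_one_eq_sum_range_succ {M : Type*} [AddCommMonoid M] (f : ℕ → M) (N : ℕ) :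
    ∑ K ∈ Icc 1 N, f K = ∑ n ∈ range N, f (n + 1) := by
  rw [range_eq_Ico, sum_Ico_add' f 0 N 1, zero_add, Ico_add_one_right_eq_Icc]

theorem prob_one_cluster_kummer_general (N : ℕ) (a : ℝ) (P : ℕ → ℝ)
    (hP : ∀ K ≤ N - 1,
      P (K + 1) = (2 * a) ^ K * (Nat.factorial (N - 1) : ℝ)
        / ((Nat.factorial K : ℝ) * (Nat.factorial (K + 1) : ℝ)
            * (Nat.factorial (N - K - 1) : ℝ)) * P 1)
    (hsum : ∑ K ∈ Finset.Icc 1 N, P K = 1) :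
    P 1 = 1 / (∑ n ∈ Finset.range N,
      (Polynomial.eval (-(N : ℝ) + 1) (ascPochhammer ℝ n))
        / (Polynomial.eval (2 : ℝ) (ascPochhammer ℝ n))
        * (-2 * a) ^ n / (Nat.factorial n : ℝ)) := by
  refine eq_one_div_of_mul_eq_one_right (.trans ?_ hsum)
  rw [sum_Icc_one_eq_sum_range_succ, sum_mul]
  refine sum_congr rfl fun n hn => ?_
  have hn : n < N := mem_range.mp hn
  rw [kummer_term_eq hn, hP n (by omega)]

/-- With `Π_{K+1} = (2a)^K·(N−1)!/[K!·(K+1)!·(N−K−1)!]·Π_1` and `Σ_{K=1}^N Π_K = 1`,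
one has `Π_1 = 1/₁F₁(−N+1; 2; −2a)`, where the terminating Kummer function is
`₁F₁(−N+1;2;z) = Σ_{n=0}^{N−1} ((−N+1)_n/(2)_n)·zⁿ/n!`. -/
theorem prob_one_cluster_kummer (N : ℕ) (hN : 1 ≤ N) (a : ℝ) (ha : 0 < a) (P : ℕ → ℝ)
    (hP : ∀ K ≤ N - 1,
      P (K + 1) = (2 * a) ^ K * (Nat.factorial (N - 1) : ℝ)
        / ((Nat.factorial K : ℝ) * (Nat.factorial (K + 1) : ℝ)
            * (Nat.factorial (N - K - 1) : ℝ)) * P 1)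
    (hsum : ∑ K ∈ Finset.Icc 1 N, P K = 1) :
    P 1 = 1 / (∑ n ∈ Finset.range N,
      (Polynomial.eval (-(N : ℝ) + 1) (ascPochhammer ℝ n))
        / (Polynomial.eval (2 : ℝ) (ascPochhammer ℝ n))
        * (-2 * a) ^ n / (Nat.factorial n : ℝ)) :=
  prob_one_cluster_kummer_general N a P hP hsum
end
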